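/- Let p : ℝ → (1,∞) be a measurable function in the class LH with 1 < p⁻ ≤ p⁺ < ∞. Suppose U : ℂ₊ → ℂ is harmonic on the upper half-plane ℂ₊ = {z ∈ ℂ : Im z > 0} and satisfies sup_{y>0} ∫_ℝ |U(x+iy)|^{p(x)} dx < ∞. Then for every k > 0, U is bounded on the closed half-plane H_k = {z ∈ ℂ : Im z ≥ k}, i.e., there exists B > 0 with |U(z)| ≤ B for all z with Im z ≥ k. -/

import Mathlib

/-!
A harmonic function equals its average over every disc in its domain: integrate the circle
mean value property against `r dr` in polar coordinates. If `Im z ≥ k` and `R = k/2`, the disc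
`B(z, R)` lies in the strip `Im z - R < Im < Im z + R` of the upper half-plane, so with
`|u| ≤ 1 + |u|^p` for `p ≥ 1`,
`π R² |U z| ≤ ∫_{B(z,R)} |U| ≤ |B(z,R)| + ∫_{strip} |U(x+iy)|^{p(x)} ≤ π R² + 2R · S`,
where `S = sup_{y>0} ∫ |U(x+iy)|^{p(x)} dx`.
-/

open MeasureTheory Complex
open scoped ENNReal

/-- `f` is harmonic on the set `s ⊆ ℂ`: it is twice continuously (real-)differentiable
on `s` and its Laplacian vanishes on `s`. -/
def HarmonicOnSet (f : ℂ → ℂ) (s : Set ℂ) : Prop :=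
  ContDiffOn ℝ 2 f s ∧ ∀ z ∈ s,
    fderiv ℝ (fun w => fderiv ℝ f w 1) z 1
      + fderiv ℝ (fun w => fderiv ℝ f w Complex.I) z Complex.I = 0

open Metric Set Real InnerProductSpace

theorem HarmonicOnSet.harmonicOnNhd {f : ℂ → ℂ} {s : Set ℂ} (hs : IsOpen s)
    (hf : HarmonicOnSet f s) : HarmonicOnNhd f s := by
  have hC2 {z : ℂ} (hz : z ∈ s) : ContDiffAt ℝ 2 f z := hf.1.contDiffAt (hs.mem_nhds hz)
  refine fun z hz => ⟨hC2 hz, ?_⟩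
  filter_upwards [hs.mem_nhds hz] with w hw
  have hf' : DifferentiableAt ℝ (fderiv ℝ f) w :=
    ((hC2 hw).fderiv_right (m := 1) le_rfl).differentiableAt one_ne_zero
  have hsecond (v : ℂ) :
      fderiv ℝ (fun w => fderiv ℝ f w v) w v = fderiv ℝ (fderiv ℝ f) w v v := by
    rw [fderiv_clm_apply hf' (differentiableAt_const v)]
    simp
  simpa [laplacian_eq_iteratedFDeriv_complexPlane, iteratedFDeriv_two_apply, hsecond]
    using hf.2 w hw

section MeanValue

variable {F : Type*} [NormedAddCommGroup F] [NormedSpace ℝ F]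

theorem setIntegral_ball_eq_setIntegral_polar (f : ℂ → F) (c : ℂ) (R : ℝ) :
    ∫ z in ball c R, f z = ∫ p in Ioo 0 R ×ˢ Ioo (-π) π, p.1 • f (circleMap c p.1 p.2) := by
  have hpolar (p : ℝ × ℝ) : c + Complex.polarCoord.symm p = circleMap c p.1 p.2 := by
    simp [circleMap, Complex.polarCoord_symm_apply, exp_mul_I, ← ofReal_cos, ← ofReal_sin]
  have htarget : Complex.polarCoord.target ∩ Ioo 0 R ×ˢ univ = Ioo 0 R ×ˢ Ioo (-π) π := by
    ext ⟨r, θ⟩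
    simp only [Complex.polarCoord_target, mem_inter_iff, mem_prod, mem_Ioi, mem_Ioo, mem_univ]
    tauto
  calc ∫ z in ball c R, f z
      = ∫ w, (ball c R).indicator f (c + w) := by
        rw [← integral_indicator measurableSet_ball, integral_add_left_eq_self]
    _ = ∫ p in Complex.polarCoord.target,
          p.1 • (ball c R).indicator f (c + Complex.polarCoord.symm p) :=
        (Complex.integral_comp_polarCoord_symm (fun w => (ball c R).indicator f (c + w))).symm
    _ = ∫ p in Complex.polarCoord.target,
          (Ioo 0 R ×ˢ univ).indicator (fun p : ℝ × ℝ => p.1 • f (circleMap c p.1 p.2)) p := by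
        refine setIntegral_congr_fun Complex.polarCoord.open_target.measurableSet fun p hp => ?_
        have hp1 : 0 < p.1 := by rw [Complex.polarCoord_target] at hp; exact hp.1
        have hmem : c + Complex.polarCoord.symm p ∈ ball c R ↔ p ∈ Ioo 0 R ×ˢ univ := by
          simp [dist_eq_norm, hp1, abs_of_pos hp1]
        by_cases h : p ∈ Ioo 0 R ×ˢ univ
        · rw [indicator_of_mem (hmem.2 h), indicator_of_mem h, hpolar]
        · rw [indicator_of_notMem (mt hmem.1 h), indicator_of_notMem h, smul_zero]
    _ = ∫ p in Ioo 0 R ×ˢ Ioo (-π) π, p.1 • f (circleMap c p.1 p.2) := by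
        rw [setIntegral_indicator (measurableSet_Ioo.prod MeasurableSet.univ), htarget]

namespace InnerProductSpace

variable [CompleteSpace F]

theorem HarmonicOnNhd.setIntegral_Ioo_circleMap_eq {f : ℂ → F} {c : ℂ} {r : ℝ}
    (hf : HarmonicOnNhd f (closedBall c |r|)) :
    ∫ θ in Ioo (-π) π, f (circleMap c r θ) = (2 * π) • f c := by
  have hmean := hf.circleAverage_eq
  rw [circleAverage_eq_integral_add (-π),
    intervalIntegral.integral_comp_add_right (fun θ => f (circleMap c r θ))] at hmean
  rw [← hmean, smul_inv_smul₀ (by positivity), ← integral_Ioc_eq_integral_Ioo,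
    ← intervalIntegral.integral_of_le (by linarith [pi_pos])]
  congr 1 <;> ring

theorem HarmonicOnNhd.setIntegral_ball_eq {f : ℂ → F} {c : ℂ} {R : ℝ} (hR : 0 ≤ R)
    (hf : HarmonicOnNhd f (closedBall c R)) :
    ∫ z in ball c R, f z = (π * R ^ 2) • f c := by
  have hint : IntegrableOn (fun p : ℝ × ℝ => p.1 • f (circleMap c p.1 p.2))
      (Ioo 0 R ×ˢ Ioo (-π) π) := by
    refine (ContinuousOn.integrableOn_compact (isCompact_Icc.prod isCompact_Icc) ?_).mono_set
      (prod_mono Ioo_subset_Icc_self Ioo_subset_Icc_self)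
    exact continuous_fst.continuousOn.smul <| hf.continuousOn.comp
      circleMap.continuous.continuousOn fun p hp =>
        closedBall_subset_closedBall hp.1.2 (circleMap_mem_closedBall c hp.1.1 p.2)
  rw [setIntegral_ball_eq_setIntegral_polar, Measure.volume_eq_prod, setIntegral_prod _ hint]
  calc ∫ r in Ioo 0 R, ∫ θ in Ioo (-π) π, r • f (circleMap c r θ)
      = ∫ r in Ioo 0 R, r • (2 * π) • f c := by
        refine setIntegral_congr_fun measurableSet_Ioo fun r hr => ?_
        rw [integral_smul, HarmonicOnNhd.setIntegral_Ioo_circleMap_eq (hf.mono ?_)]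
        exact closedBall_subset_closedBall (by rw [abs_of_pos hr.1]; exact hr.2.le)
    _ = (π * R ^ 2) • f c := by
        rw [integral_smul_const, ← integral_Ioc_eq_integral_Ioo,
          ← intervalIntegral.integral_of_le hR, integral_id, smul_smul]
        congr 1
        ring

end InnerProductSpace

end MeanValue

theorem ENNReal.le_one_add_rpow {x : ℝ≥0∞} {e : ℝ} (he : 1 ≤ e) : x ≤ 1 + x ^ e := by
  rcases le_or_gt x 1 with hx | hx
  · exact hx.trans le_self_add
  · calc x = x ^ (1 : ℝ) := (ENNReal.rpow_one x).symm
      _ ≤ x ^ e := ENNReal.rpow_le_rpow_of_exponent_le hx.le he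
      _ ≤ 1 + x ^ e := le_add_self

theorem ball_subset_im_preimage_Ioo (c : ℂ) (R : ℝ) :
    ball c R ⊆ im ⁻¹' Ioo (c.im - R) (c.im + R) := fun w hw => by
  have h := (abs_im_le_norm (w - c)).trans_lt (mem_ball_iff_norm.1 hw)
  rw [sub_im, abs_sub_lt_iff] at h
  constructor <;> linarith

theorem setLIntegral_im_preimage_le (G : ℂ → ℝ≥0∞) {t : Set ℝ} (ht : MeasurableSet t) :
    ∫⁻ z in im ⁻¹' t, G z ≤ ∫⁻ y in t, ∫⁻ x : ℝ, G (x + y * I) := by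
  set H : ℝ × ℝ → ℝ≥0∞ := fun q => (im ⁻¹' t).indicator G (q.2 + q.1 * I)
  have hH (y : ℝ) : ∫⁻ x : ℝ, H (y, x) = t.indicator (fun y => ∫⁻ x : ℝ, G (x + y * I)) y := by
    by_cases hy : y ∈ t <;> simp [H, hy]
  calc ∫⁻ z in im ⁻¹' t, G z
      = ∫⁻ q : ℝ × ℝ, H q.swap := by
        rw [← lintegral_indicator (measurable_im ht),
          ← volume_preserving_equiv_real_prod.symm.lintegral_comp_emb
            measurableEquivRealProd.symm.measurableEmbedding]
        simp [H, mk_eq_add_mul_I]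
    _ ≤ ∫⁻ y, ∫⁻ x, H (y, x) := by
        rw [Measure.volume_eq_prod, lintegral_prod_swap]
        exact lintegral_prod_le H
    _ = ∫⁻ y in t, ∫⁻ x : ℝ, G (x + y * I) := by
        simp_rw [hH]
        exact lintegral_indicator ht _

theorem InnerProductSpace.HarmonicOnNhd.enorm_smul_le_of_lintegral_rpow_le
    {U : ℂ → ℂ} {p : ℝ → ℝ} (hp : ∀ x, 1 ≤ p x) {S : ℝ≥0∞}
    (hS : ∀ y : ℝ, 0 < y → ∫⁻ x : ℝ, ENNReal.ofReal ‖U (x + y * I)‖ ^ p x ≤ S)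
    {c : ℂ} {R : ℝ} (hR : 0 ≤ R) (hc : R ≤ c.im) (hU : HarmonicOnNhd U (closedBall c R)) :
    ‖(π * R ^ 2) • U c‖ₑ ≤ volume (ball c R) + ENNReal.ofReal (2 * R) * S := by
  have hstrip : Ioo (c.im - R) (c.im + R) ⊆ Ioi 0 := fun y hy => by
    simp only [mem_Ioi]; linarith [hy.1]
  calc ‖(π * R ^ 2) • U c‖ₑ
      = ‖∫ z in ball c R, U z‖ₑ := by rw [hU.setIntegral_ball_eq hR]
    _ ≤ ∫⁻ z in ball c R, ‖U z‖ₑ := enorm_integral_le_lintegral_enorm _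
    _ ≤ ∫⁻ z in ball c R, (1 + ENNReal.ofReal ‖U z‖ ^ p z.re) :=
        lintegral_mono fun z => by rw [ofReal_norm]; exact ENNReal.le_one_add_rpow (hp z.re)
    _ = volume (ball c R) + ∫⁻ z in ball c R, ENNReal.ofReal ‖U z‖ ^ p z.re := by
        rw [lintegral_add_left measurable_const, setLIntegral_const, one_mul]
    _ ≤ volume (ball c R) + ∫⁻ y in Ioo (c.im - R) (c.im + R),
          ∫⁻ x : ℝ, ENNReal.ofReal ‖U (x + y * I)‖ ^ p x := by
        gcongr
        refine (lintegral_mono_set (ball_subset_im_preimage_Ioo c R)).trans ?_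
        simpa using setLIntegral_im_preimage_le (fun z => ENNReal.ofReal ‖U z‖ ^ p z.re)
          measurableSet_Ioo
    _ ≤ volume (ball c R) + ∫⁻ _ in Ioo (c.im - R) (c.im + R), S :=
        add_le_add le_rfl (setLIntegral_mono' measurableSet_Ioo fun y hy => hS y (hstrip hy))
    _ = volume (ball c R) + ENNReal.ofReal (2 * R) * S := by
        rw [setLIntegral_const, Real.volume_Ioo, mul_comm]
        ring_nf

theorem stmt14_general (p : ℝ → ℝ)
    (hbounds : ∃ a b : ℝ, 1 < a ∧ ∀ x : ℝ, a ≤ p x ∧ p x ≤ b)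
    (U : ℂ → ℂ) (hU : HarmonicOnSet U {z : ℂ | 0 < z.im})
    (hnorm : (⨆ y ∈ Set.Ioi (0:ℝ),
      ∫⁻ x : ℝ, ENNReal.ofReal (‖U (x + y * Complex.I)‖) ^ (p x)) < ⊤) :
    ∀ k : ℝ, 0 < k → ∃ B : ℝ, 0 < B ∧
      ∀ z : ℂ, k ≤ z.im → ‖U z‖ ≤ B := by
  obtain ⟨a, _, ha, hab⟩ := hbounds
  have hp (x : ℝ) : 1 ≤ p x := ha.le.trans (hab x).1
  set S := ⨆ y ∈ Ioi (0:ℝ), ∫⁻ x : ℝ, ENNReal.ofReal ‖U (x + y * I)‖ ^ p x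
  have hS (y : ℝ) (hy : 0 < y) : ∫⁻ x : ℝ, ENNReal.ofReal ‖U (x + y * I)‖ ^ p x ≤ S :=
    le_biSup (fun y : ℝ => ∫⁻ x : ℝ, ENNReal.ofReal ‖U (x + y * I)‖ ^ p x) hy
  have hharm := hU.harmonicOnNhd (isOpen_lt continuous_const continuous_im)
  intro k hk
  set R := k / 2 with hR
  set T := ENNReal.ofReal R ^ 2 * NNReal.pi + ENNReal.ofReal (2 * R) * S
  have hT : T ≠ ⊤ := by finiteness [hnorm.ne]
  refine ⟨1 + T.toReal / (π * R ^ 2), by positivity, fun z hz => ?_⟩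
  have hball : closedBall z R ⊆ {w : ℂ | 0 < w.im} := fun w hw =>
    (sub_nonneg.2 hz).trans_lt
      (ball_subset_im_preimage_Ioo z k (closedBall_subset_ball (by linarith [hR]) hw)).1
  have hbound := (hharm.mono hball).enorm_smul_le_of_lintegral_rpow_le hp hS
    (by positivity) (by linarith [hR])
  rw [Complex.volume_ball] at hbound
  have hbound' := ENNReal.toReal_mono hT hbound
  rw [toReal_enorm, norm_smul, Real.norm_of_nonneg (by positivity)] at hbound'
  calc ‖U z‖ ≤ T.toReal / (π * R ^ 2) := by rw [le_div_iff₀ (by positivity)]; linarith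
    _ ≤ 1 + T.toReal / (π * R ^ 2) := le_add_of_nonneg_left zero_le_one

/-- let `p : ℝ → (1,∞)` be measurable, in the class `LH`, with
`1 < p⁻ ≤ p⁺ < ∞`. If `U` is harmonic on the upper half-plane and
`sup_{y>0} ∫_ℝ |U(x+iy)|^{p(x)} dx < ∞`, then for every `k > 0`, `U` is bounded on the
closed half-plane `{z : Im z ≥ k}`. -/
theorem stmt14 (p : ℝ → ℝ) (hmeas : Measurable p)
    (hlog : ∃ Clog : ℝ, 0 < Clog ∧ ∀ x y : ℝ, 0 < |x - y| → |x - y| < 1/2 →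
      |p x - p y| ≤ Clog / Real.log (1/|x - y|))
    (hinf : ∃ pinf Cinf : ℝ, 0 < Cinf ∧ ∀ x : ℝ,
      |p x - pinf| ≤ Cinf / Real.log (Real.exp 1 + |x|))
    (hbounds : ∃ a b : ℝ, 1 < a ∧ ∀ x : ℝ, a ≤ p x ∧ p x ≤ b)
    (U : ℂ → ℂ) (hU : HarmonicOnSet U {z : ℂ | 0 < z.im})
    (hnorm : (⨆ y ∈ Set.Ioi (0:ℝ),
      ∫⁻ x : ℝ, ENNReal.ofReal (‖U (x + y * Complex.I)‖) ^ (p x)) < ⊤) :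
    ∀ k : ℝ, 0 < k → ∃ B : ℝ, 0 < B ∧
      ∀ z : ℂ, k ≤ z.im → ‖U z‖ ≤ B :=
  stmt14_general p hbounds U hU hnorm
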